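/- In the abstract setting, the operator D defined by (Dω)_j := d(ω_j) − e(ω_{j+1}) maps 𝒦^p into 𝒦^{p+1} and satisfies D ∘ D = 0; the shift b and the operator α map 𝒦^p into itself; and D commutes with both: D ∘ b = b ∘ D and D ∘ α = α ∘ D as maps 𝒦^p → 𝒦^{p+1}. -/
import Mathlib


section AbstractSetting

variable {R : Type*} [CommRing R] {Ω : ℕ → Type*}
  [∀ p, AddCommGroup (Ω p)] [∀ p, Module R (Ω p)]

/-- The space `𝒦^p` of formal series `Σ_j b^j ω_j` with `e(ω_0) = 0`,
as a submodule of the module of sequences `ℕ → Ω p`. -/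
def KSeq (e : ∀ p : ℕ, Ω p →ₗ[R] Ω (p + 1)) (p : ℕ) :
    Submodule R (ℕ → Ω p) where
  carrier := {ω | e p (ω 0) = 0}
  add_mem' := by
    intro x y hx hy
    simp only [Set.mem_setOf_eq, Pi.add_apply, map_add] at *
    rw [hx, hy, add_zero]
  zero_mem' := by simp
  smul_mem' := by
    intro c x hx
    simp only [Set.mem_setOf_eq, Pi.smul_apply, map_smul] at *
    rw [hx, smul_zero]

/-- The operator `D` on sequences: `(D ω)_j = d(ω_j) - e(ω_{j+1})`. -/
def Dop (d e : ∀ p : ℕ, Ω p →ₗ[R] Ω (p + 1)) (p : ℕ) (ω : ℕ → Ω p) :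
    ℕ → Ω (p + 1) :=
  fun j => d p (ω j) - e p (ω (j + 1))

/-- The shift operator `b` on sequences: `(b ω)_0 = 0`, `(b ω)_j = ω_{j-1}`. -/
def bShift {p : ℕ} (ω : ℕ → Ω p) : ℕ → Ω p
  | 0 => 0
  | (k + 1) => ω k

/-- The operator `α` on sequences: `(α ω)_0 = a(ω_0)`,
`(α ω)_j = a(ω_j) + (j-1) • ω_{j-1}` for `j ≥ 1`. -/
def alphaSeq (a : ∀ p : ℕ, Ω p →ₗ[R] Ω p) (p : ℕ) (ω : ℕ → Ω p) : ℕ → Ω p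
  | 0 => a p (ω 0)
  | (k + 1) => a p (ω (k + 1)) + (k : ℤ) • ω k

end AbstractSetting

/-- In the abstract setting, `D` maps `𝒦^p` into `𝒦^{p+1}`
and `D ∘ D = 0`; the shift `b` and the operator `α` map `𝒦^p` into itself;
and `D` commutes with both `b` and `α` as maps `𝒦^p → 𝒦^{p+1}`. -/
theorem brieskorn_D_complex_and_commutes
    {R : Type*} [CommRing R] {Ω : ℕ → Type*}
    [∀ p, AddCommGroup (Ω p)] [∀ p, Module R (Ω p)]
    (d e : ∀ p : ℕ, Ω p →ₗ[R] Ω (p + 1))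
    (a : ∀ p : ℕ, Ω p →ₗ[R] Ω p)
    (hdd : ∀ (p : ℕ) (x : Ω p), d (p + 1) (d p x) = 0)
    (hee : ∀ (p : ℕ) (x : Ω p), e (p + 1) (e p x) = 0)
    (hde : ∀ (p : ℕ) (x : Ω p), d (p + 1) (e p x) = - e (p + 1) (d p x))
    (hea : ∀ (p : ℕ) (x : Ω p), e p (a p x) = a (p + 1) (e p x))
    (hda : ∀ (p : ℕ) (x : Ω p), d p (a p x) = a (p + 1) (d p x) + e p x)
    (p : ℕ) :
    (∀ ω ∈ KSeq e p, Dop d e p ω ∈ KSeq e (p + 1)) ∧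
    (∀ ω ∈ KSeq e p, Dop d e (p + 1) (Dop d e p ω) = 0) ∧
    (∀ ω ∈ KSeq e p, bShift ω ∈ KSeq e p) ∧
    (∀ ω ∈ KSeq e p, alphaSeq a p ω ∈ KSeq e p) ∧
    (∀ ω ∈ KSeq e p, Dop d e p (bShift ω) = bShift (Dop d e p ω)) ∧
    (∀ ω ∈ KSeq e p, Dop d e p (alphaSeq a p ω) = alphaSeq a (p + 1) (Dop d e p ω)) := by
  refine ⟨?_, ?_, ?_, ?_, ?_, ?_⟩
  · intro ω hω
    simp only [KSeq, Submodule.mem_mk, AddSubmonoid.mem_mk, AddSubsemigroup.mem_mk,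
      Set.mem_setOf_eq] at *
    simp only [Dop, map_sub, hee, sub_zero]
    have := hde p (ω 0)
    rw [hω] at this
    simpa using this.symm
  · intro ω _
    funext j
    simp only [Dop, map_sub, hdd, hde, hee, Pi.zero_apply, sub_neg_eq_add]
    abel
  · intro ω _
    simp only [KSeq, Submodule.mem_mk, AddSubmonoid.mem_mk, AddSubsemigroup.mem_mk,
      Set.mem_setOf_eq, bShift, map_zero]
  · intro ω hω
    simp only [KSeq, Submodule.mem_mk, AddSubmonoid.mem_mk, AddSubsemigroup.mem_mk,
      Set.mem_setOf_eq] at *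
    simp [alphaSeq, hea, hω]
  · intro ω hω
    have h0 : e p (ω 0) = 0 := hω
    funext j
    cases j with
    | zero => simp [Dop, bShift, h0]
    | succ k => simp [Dop, bShift]
  · intro ω hω
    simp only [KSeq, Submodule.mem_mk, AddSubmonoid.mem_mk, AddSubsemigroup.mem_mk,
      Set.mem_setOf_eq] at hω
    funext j
    cases j with
    | zero =>
      simp only [Dop, alphaSeq, map_add, map_sub, hda, hea, Nat.cast_zero, zero_smul,
        add_zero, map_zero, hω]
    | succ k =>
      simp only [Dop, alphaSeq, map_add, map_sub, hda, hea,
        LinearMap.map_smul_of_tower, smul_sub, Nat.cast_add, Nat.cast_one,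
        add_smul, one_smul]
      abel
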